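/- arXiv:1505.03270 — 4 statements merged into one kernel-verified Lean document; each statement's English description precedes it below -/
import Mathlib

section
/- Let G be a group with identity e, K a loop with identity ε, and for each σ ∈ K let ψ_σ : G → G be a bijection with ψ_σ(e) = e, and ψ_ε = Id; equip K×G with the loop multiplication (α,a)∘(β,b) = (αβ, ψ_β(a)·b). Then the subgroup Ḡ = {(ε,a) : a ∈ G} is middle nuclear if and only if ψ_σ : G → G is an automorphism of G for every σ ∈ K. -/
/-! With `x ∘ y` the twisted product, both `(x ∘ (ε,a)) ∘ y` and `x ∘ ((ε,a) ∘ y)` have first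
coordinate `x₁y₁`; their second coordinates are `ψ_{y₁}(x₂a)·y₂` and `ψ_{y₁}(x₂)·ψ_{y₁}(a)·y₂`,
so middle associativity at `(ε,a)` for all `a` is exactly multiplicativity of every `ψ_σ`. -/

universe u v

/-- A loop: a type with a multiplication all of whose left and right translations
are bijective, together with a two-sided identity element. -/
class MLoop (L : Type u) extends Mul L, One L where
  mul_left_bij : ∀ x : L, Function.Bijective fun y : L => x * y
  mul_right_bij : ∀ x : L, Function.Bijective fun y : L => y * x
  one_mul : ∀ x : L, 1 * x = x
  mul_one : ∀ x : L, x * 1 = x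

instance (L : Type u) [MLoop L] : Nonempty L := ⟨1⟩

/-- Left division `x \ y = λ_x⁻¹ y`. -/
noncomputable def MLoop.ldiv {L : Type u} [MLoop L] (x y : L) : L :=
  Function.invFun (fun z : L => x * z) y

/-- Right division `x / y = ρ_y⁻¹ x`. -/
noncomputable def MLoop.rdiv {L : Type u} [MLoop L] (x y : L) : L :=
  Function.invFun (fun z : L => z * y) x

/-- Middle inner mapping `T_x = ρ_x⁻¹ ∘ λ_x`, i.e. `T_x t` is the unique `z` with
`z * x = x * t`. -/
noncomputable def MLoop.midInner {L : Type u} [MLoop L] (x t : L) : L :=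
  Function.invFun (fun z : L => z * x) (x * t)

/-- The left nucleus of a multiplicative structure. -/
def leftNucleus (L : Type u) [Mul L] : Set L :=
  {u : L | ∀ x y : L, u * x * y = u * (x * y)}

/-- The right nucleus of a multiplicative structure. -/
def rightNucleus (L : Type u) [Mul L] : Set L :=
  {u : L | ∀ x y : L, x * y * u = x * (y * u)}

/-- The middle nucleus of a multiplicative structure. -/
def middleNucleus (L : Type u) [Mul L] : Set L :=
  {u : L | ∀ x y : L, x * u * y = x * (u * y)}

/-- A subset of a loop is a normal subloop if it is the kernel of a loop homomorphism. -/
def IsNormalSubloop {L : Type u} [MLoop L] (N : Set L) : Prop :=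
  ∃ (M : Type u) (i : MLoop M) (f : L → M),
    (∀ x y : L, f (x * y) = i.toMul.mul (f x) (f y)) ∧ N = {x : L | f x = i.toOne.one}

/-- The data `(Θ, f)` of a Schreier extension of the group `G` by the loop `K`. -/
structure SchreierData (K : Type u) (G : Type v) [MLoop K] [Group G] where
  Θ : K → G ≃* G
  f : K → K → G
  theta_one : Θ 1 = MulEquiv.refl G
  f_one_left : ∀ σ : K, f 1 σ = 1
  f_one_right : ∀ σ : K, f σ 1 = 1

/-- The multiplication of the Schreier loop `L(Θ,f)` on `K × G`:
`(τ,t)∘(σ,s) = (τσ, f(τ,σ)·Θ_σ(t)·s)`. -/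
def SchreierData.mul {K : Type u} {G : Type v} [MLoop K] [Group G]
    (D : SchreierData K G) (p q : K × G) : K × G :=
  (p.1 * q.1, D.f p.1 q.1 * D.Θ q.1 p.2 * q.2)

def twistedMul {K : Type u} {G : Type v} [Mul K] [Mul G] (ψ : K → G → G) (p q : K × G) :
    K × G :=
  (p.1 * q.1, ψ q.1 p.2 * q.2)

section TwistedMul

variable {K : Type u} {G : Type v} [MLoop K] [Monoid G] {ψ : K → G → G}

theorem twistedMul_twistedMul_one_left (hid : ψ 1 = id) (x y : K × G) (a : G) :
    twistedMul ψ (twistedMul ψ x (1, a)) y = (x.1 * y.1, ψ y.1 (x.2 * a) * y.2) := by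
  simp [twistedMul, hid, MLoop.mul_one]

theorem twistedMul_one_left_twistedMul (x y : K × G) (a : G) :
    twistedMul ψ x (twistedMul ψ (1, a) y) = (x.1 * y.1, ψ y.1 x.2 * (ψ y.1 a * y.2)) := by
  simp [twistedMul, MLoop.one_mul]

theorem twistedMul_assoc_one_left_iff (hid : ψ 1 = id) :
    (∀ a : G, ∀ x y : K × G,
        twistedMul ψ (twistedMul ψ x (1, a)) y = twistedMul ψ x (twistedMul ψ (1, a) y)) ↔
      ∀ σ : K, ∀ a b : G, ψ σ (a * b) = ψ σ a * ψ σ b := by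
  simp only [twistedMul_twistedMul_one_left hid, twistedMul_one_left_twistedMul,
    Prod.mk.injEq, true_and]
  constructor
  · intro h σ a b
    simpa [MLoop.one_mul] using h b (1, a) (σ, 1)
  · intro h a x y
    rw [h, mul_assoc]

end TwistedMul

theorem schreier_stmt1_general {K G : Type u} [MLoop K] [Group G]
    (ψ : K → G → G)
    (hid : ψ 1 = id) :
    let m : K × G → K × G → K × G := fun p q => (p.1 * q.1, ψ q.1 p.2 * q.2)
    (∀ a : G, ∀ x y : K × G, m (m x ((1 : K), a)) y = m x (m ((1 : K), a) y)) ↔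
      (∀ σ : K, ∀ a b : G, ψ σ (a * b) = ψ σ a * ψ σ b) :=
  twistedMul_assoc_one_left_iff hid

/-- for the loop `(α,a)∘(β,b) = (αβ, ψ_β(a)·b)` on `K × G`, the subgroup
`Ḡ = {(ε,a) : a ∈ G}` is middle nuclear iff every `ψ_σ` is an automorphism of `G`. -/
theorem schreier_stmt1 {K G : Type u} [MLoop K] [Group G]
    (ψ : K → G → G)
    (hbij : ∀ σ : K, Function.Bijective (ψ σ))
    (hone : ∀ σ : K, ψ σ 1 = 1)
    (hid : ψ 1 = id) :
    let m : K × G → K × G → K × G := fun p q => (p.1 * q.1, ψ q.1 p.2 * q.2)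
    (∀ a : G, ∀ x y : K × G, m (m x ((1 : K), a)) y = m x (m ((1 : K), a) y)) ↔
      (∀ σ : K, ∀ a b : G, ψ σ (a * b) = ψ σ a * ψ σ b) :=
  schreier_stmt1_general ψ hid
end

section
/- For a Schreier loop L(Θ,f) defined on K×G, the normal subgroup Ḡ = {(ε,t) : t ∈ G} is nuclear (i.e. contained in the intersection of the left, right and middle nuclei of L(Θ,f)) if and only if Θ_{στ} ∘ Θ_σ^{-1} ∘ Θ_τ^{-1} = ι_{f(σ,τ)} for all σ,τ ∈ K, where ι_s denotes the inner automorphism ι_s(t) = s·t·s^{-1} of G. -/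
/-!
The elements `(ε, t)` of `Ḡ` associate on the right and in the middle for any Schreier data, by the
normalisations `Θ_ε = Id`, `f(ε, σ) = f(σ, ε) = e` alone. Associativity with `(ε, t)` on the left
amounts to `Θ_{στ}(t) · f(σ,τ) = f(σ,τ) · Θ_τ(Θ_σ t)` (necessity: take the elements `(σ, e)`,
`(τ, e)`), which is the twisting identity with `Θ_τ(Θ_σ t)` in place of `g`.
-/

universe u v

theorem MulEquiv.forall_apply_symm_eq_conj_iff {G : Type v} [Group G] (α β : G ≃* G) (c : G) :
    (∀ g, α (β.symm g) = c * g * c⁻¹) ↔ ∀ t, α t * c = c * β t := by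
  constructor
  · intro h t
    rw [← β.symm_apply_apply t, h, β.symm_apply_apply]
    group
  · intro h g
    rw [eq_mul_inv_iff_mul_eq, h, β.apply_symm_apply]

namespace SchreierData

variable {K : Type u} {G : Type v} [MLoop K] [Group G] (D : SchreierData K G)

theorem one_prod_mul (t : G) (x : K × G) : D.mul (1, t) x = (x.1, D.Θ x.1 t * x.2) := by
  simp only [mul, MLoop.one_mul, D.f_one_left, one_mul]

theorem mul_one_prod (x : K × G) (t : G) : D.mul x (1, t) = (x.1, x.2 * t) := by
  simp only [mul, MLoop.mul_one, D.f_one_right, D.theta_one, MulEquiv.refl_apply, one_mul]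

theorem mul_mul_one_prod (x y : K × G) (t : G) :
    D.mul (D.mul x y) (1, t) = D.mul x (D.mul y (1, t)) := by
  rw [mul_one_prod, mul_one_prod]
  simp only [mul, mul_assoc]

theorem mul_one_prod_mul (x y : K × G) (t : G) :
    D.mul (D.mul x (1, t)) y = D.mul x (D.mul (1, t) y) := by
  rw [mul_one_prod, one_prod_mul]
  simp only [mul, map_mul, mul_assoc]

theorem one_prod_mul_mul_iff (t : G) :
    (∀ x y : K × G, D.mul (D.mul (1, t) x) y = D.mul (1, t) (D.mul x y)) ↔
      ∀ σ τ : K, D.Θ (σ * τ) t * D.f σ τ = D.f σ τ * D.Θ τ (D.Θ σ t) := by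
  simp_rw [one_prod_mul]
  simp only [mul, Prod.mk.injEq, true_and, map_mul, ← mul_assoc, mul_left_inj]
  constructor
  · intro h σ τ
    simpa using (h (σ, 1) (τ, 1)).symm
  · intro h x y
    rw [h]

end SchreierData

/-- in a Schreier loop `L(Θ,f)` on `K × G`, the subgroup
`Ḡ = {(ε,t) : t ∈ G}` is nuclear (contained in the left, middle and right nuclei)
iff `Θ_{στ} ∘ Θ_σ⁻¹ ∘ Θ_τ⁻¹ = ι_{f(σ,τ)}` for all `σ τ`. -/
theorem schreier_stmt5 {K G : Type u} [MLoop K] [Group G]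
    (Θ : K → G ≃* G) (hΘ : Θ 1 = MulEquiv.refl G)
    (f : K → K → G) (hf1 : ∀ σ : K, f 1 σ = 1) (hf2 : ∀ σ : K, f σ 1 = 1) :
    let m : K × G → K × G → K × G :=
      fun p q => (p.1 * q.1, f p.1 q.1 * Θ q.1 p.2 * q.2)
    (∀ t : G,
        (∀ x y : K × G, m (m ((1 : K), t) x) y = m ((1 : K), t) (m x y)) ∧
        (∀ x y : K × G, m (m x ((1 : K), t)) y = m x (m ((1 : K), t) y)) ∧
        (∀ x y : K × G, m (m x y) ((1 : K), t) = m x (m y ((1 : K), t)))) ↔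
      (∀ σ τ : K, ∀ g : G,
        Θ (σ * τ) ((Θ σ).symm ((Θ τ).symm g)) = f σ τ * g * (f σ τ)⁻¹) := by
  intro m
  let D : SchreierData K G := ⟨Θ, f, hΘ, hf1, hf2⟩
  have hm : m = D.mul := rfl
  simp only [hm, D.mul_one_prod_mul, D.mul_mul_one_prod, implies_true, and_true,
    D.one_prod_mul_mul_iff]
  rw [forall_comm]
  refine forall_congr' fun σ => ?_
  rw [forall_comm]
  exact forall_congr' fun τ =>
    (MulEquiv.forall_apply_symm_eq_conj_iff (Θ (σ * τ)) ((Θ σ).trans (Θ τ)) (f σ τ)).symm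
end

section
/- Let G be a middle and right nuclear normal subgroup of a loop L, let (κ,Σ) be a data pair for G (κ : K → L/G an isomorphism from a loop K, Σ a left transversal of L/G with e ∈ Σ), and let l : K → L be defined by l_σ = Σ ∩ κ(σ). Define Θ_σ = (T_{l_σ})^{-1}|_G and f(σ,τ) = l_{στ}\(l_σ·l_τ). Then L(Θ,f) is a Schreier loop on K×G and the map F : L(Θ,f) → L defined by F(σ,s) = l_σ·s is a Schreier decomposition of L with respect to G whose underlying isomorphism is κ. Conversely, if F : L(Θ,f) → L is any Schreier decomposition of L with respect to G, then G is middle and right nuclear, F has the form F(σ,s) = l_σ·s with l_σ = F(σ,e), and Θ and f satisfy Θ_σ = (T_{l_σ})^{-1}|_G and f(σ,τ) = l_{στ}\(l_σ·l_τ). -/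
universe u v

/-! When `G` is the kernel of `π`, every quotient `x \ y` or `y / x` with `π x = π y` lies in
`G`. If moreover `G` is middle and right nuclear, its elements can be reassociated freely inside
products, which makes `t ↦ l_σ \ (t · l_σ)` an automorphism of `G` and turns
`(σ, s) ↦ l_σ · s` into a homomorphism from the Schreier loop. Conversely, in a Schreier loop
right and left multiplication by `(1, t)` act on the `G`-coordinate by `s ↦ s t` and
`s ↦ Θ_σ(t) s`, so associativity in `G` yields the nuclear laws. -/

namespace MLoop

variable {L : Type*} [MLoop L]

theorem mul_left_cancel {x y z : L} (h : x * y = x * z) : y = z :=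
  (mul_left_bij x).1 h

theorem mul_right_cancel {x y z : L} (h : y * x = z * x) : y = z :=
  (mul_right_bij x).1 h

theorem mul_ldiv (x y : L) : x * ldiv x y = y :=
  Function.invFun_eq ((mul_left_bij x).2 y)

theorem ldiv_eq_of_mul_eq {x y z : L} (h : x * z = y) : ldiv x y = z :=
  MLoop.mul_left_cancel (by rw [mul_ldiv, h])

theorem rdiv_mul (x y : L) : rdiv x y * y = x :=
  Function.invFun_eq ((mul_right_bij y).2 x)

theorem rdiv_eq_of_mul_eq {x y z : L} (h : z * y = x) : rdiv x y = z :=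
  MLoop.mul_right_cancel (by rw [rdiv_mul, h])

theorem midInner_eq_of_mul_eq {x t z : L} (h : z * x = x * t) : midInner x t = z := by
  rw [midInner, ← h]
  exact Function.leftInverse_invFun (mul_right_bij x).1 z

theorem map_one_of_map_mul {M : Type*} [MLoop M] {φ : L → M}
    (hφ : ∀ x y, φ (x * y) = φ x * φ y) : φ 1 = 1 :=
  MLoop.mul_left_cancel (x := φ 1) (by rw [← hφ, MLoop.mul_one, MLoop.mul_one])

theorem ldiv_mul_mul_eq_of_mem_nucleus {x t s : L} (hs : s ∈ middleNucleus L)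
    (hxs : ldiv x (s * x) ∈ rightNucleus L) :
    ldiv x (t * s * x) = ldiv x (t * x) * ldiv x (s * x) := by
  refine ldiv_eq_of_mul_eq ?_
  calc x * (ldiv x (t * x) * ldiv x (s * x))
      = x * ldiv x (t * x) * ldiv x (s * x) := (hxs _ _).symm
    _ = t * (x * ldiv x (s * x)) := by rw [mul_ldiv, hxs]
    _ = t * s * x := by rw [mul_ldiv, hs]

theorem mul_mul_mul_eq_of_mem_nucleus {a b c f θ t s : L} (hf : c * f = a * b)
    (hθ : b * θ = t * b) (hfm : f ∈ middleNucleus L) (hθr : θ ∈ rightNucleus L)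
    (htm : t ∈ middleNucleus L) (hsr : s ∈ rightNucleus L) :
    c * (f * θ * s) = a * t * (b * s) := by
  calc c * (f * θ * s)
      = c * (f * θ) * s := (hsr _ _).symm
    _ = a * b * θ * s := by rw [← hfm, hf]
    _ = a * (t * b) * s := by rw [hθr, hθ]
    _ = a * t * (b * s) := by rw [← htm, hsr]

theorem coe_one_of_coe_mul {G : Set L} [Group G]
    (hGmul : ∀ a b : G, ((a * b : G) : L) = (a : L) * (b : L)) : ((1 : G) : L) = 1 :=
  MLoop.mul_left_cancel (x := ((1 : G) : L)) (by rw [← hGmul, _root_.mul_one, MLoop.mul_one])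

end MLoop

open MLoop hiding one_mul mul_one mul_left_cancel mul_right_cancel

section Kernel

variable {L Q : Type*} {G : Set L} {π : L → Q}

theorem map_eq_one_of_mem_ker [One Q] (hker : G = {x : L | π x = 1}) {x : L} (hx : x ∈ G) :
    π x = 1 :=
  (Set.ext_iff.mp hker x).1 hx

variable [MLoop L] [MLoop Q]

theorem ldiv_mem_ker (hπ : ∀ x y : L, π (x * y) = π x * π y) (hker : G = {x : L | π x = 1})
    {x y : L} (h : π y = π x) : ldiv x y ∈ G := by
  rw [hker]
  exact MLoop.mul_left_cancel (x := π x) (by rw [MLoop.mul_one, ← hπ, mul_ldiv, h])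

theorem rdiv_mem_ker (hπ : ∀ x y : L, π (x * y) = π x * π y) (hker : G = {x : L | π x = 1})
    {x y : L} (h : π x = π y) : rdiv x y ∈ G := by
  rw [hker]
  exact MLoop.mul_right_cancel (x := π y) (by rw [MLoop.one_mul, ← hπ, rdiv_mul, h])

theorem ldiv_section_mem_ker {K : Type*} [MLoop K] (hπ : ∀ x y : L, π (x * y) = π x * π y)
    (hker : G = {x : L | π x = 1}) {l : K → L}
    (hl : ∀ σ τ, π (l (σ * τ)) = π (l σ) * π (l τ)) (σ τ : K) :
    ldiv (l (σ * τ)) (l σ * l τ) ∈ G :=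
  ldiv_mem_ker hπ hker (by rw [hπ, hl])

theorem bijective_section_mul {K : Type*} {l : K → L} (hπ : ∀ x y : L, π (x * y) = π x * π y)
    (hker : G = {x : L | π x = 1}) (hlbij : Function.Bijective (π ∘ l)) :
    Function.Bijective fun p : K × G => l p.1 * (p.2 : L) := by
  have hπp (p : K × G) : π (l p.1 * p.2) = π (l p.1) := by
    rw [hπ, map_eq_one_of_mem_ker hker p.2.2, MLoop.mul_one]
  refine ⟨fun p q h => ?_, fun x => ?_⟩
  · have h1 : p.1 = q.1 := hlbij.1 (by simpa only [Function.comp_apply, hπp] using congrArg π h)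
    have h2 : p.2 = q.2 := Subtype.ext (MLoop.mul_left_cancel (h.trans (by rw [h1])))
    exact Prod.ext h1 h2
  · obtain ⟨σ, hσ⟩ := hlbij.2 (π x)
    exact ⟨(σ, ⟨ldiv (l σ) x, ldiv_mem_ker hπ hker hσ.symm⟩), mul_ldiv _ _⟩

end Kernel

section Direct

variable {K L Q : Type*} [MLoop K] [MLoop L] [MLoop Q] {G : Set L} [Group G] {π : L → Q}
  (hGmul : ∀ a b : G, ((a * b : G) : L) = (a : L) * (b : L))
  (hπ : ∀ x y : L, π (x * y) = π x * π y) (hker : G = {x : L | π x = 1})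
  (hnuc : G ⊆ middleNucleus L ∩ rightNucleus L)

/-- `(T_x)⁻¹` restricted to `G`. -/
noncomputable def nuclearConj (x : L) : G ≃* G where
  toFun t := ⟨ldiv x (t * x),
    ldiv_mem_ker hπ hker (by rw [hπ, map_eq_one_of_mem_ker hker t.2, MLoop.one_mul])⟩
  invFun u := ⟨rdiv (x * u) x,
    rdiv_mem_ker hπ hker (by rw [hπ, map_eq_one_of_mem_ker hker u.2, MLoop.mul_one])⟩
  left_inv t := Subtype.ext (rdiv_eq_of_mul_eq (mul_ldiv _ _).symm)
  right_inv u := Subtype.ext (ldiv_eq_of_mul_eq (rdiv_mul _ _).symm)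
  map_mul' t s := Subtype.ext <| by
    simp only [hGmul]
    exact ldiv_mul_mul_eq_of_mem_nucleus (hnuc s.2).1 <| (hnuc <|
      ldiv_mem_ker hπ hker (by rw [hπ, map_eq_one_of_mem_ker hker s.2, MLoop.one_mul])).2

theorem coe_nuclearConj_apply (x : L) (t : G) :
    (nuclearConj hGmul hπ hker hnuc x t : L) = ldiv x (t * x) :=
  rfl

theorem midInner_nuclearConj_apply (x : L) (t : G) :
    midInner x (nuclearConj hGmul hπ hker hnuc x t) = t :=
  midInner_eq_of_mul_eq (mul_ldiv _ _).symm

variable {l : K → L} (hl1 : l 1 = 1) (hl : ∀ σ τ, π (l (σ * τ)) = π (l σ) * π (l τ))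

noncomputable def schreierDataOfSection : SchreierData K G where
  Θ σ := nuclearConj hGmul hπ hker hnuc (l σ)
  f σ τ := ⟨ldiv (l (σ * τ)) (l σ * l τ), ldiv_section_mem_ker hπ hker hl σ τ⟩
  theta_one := MulEquiv.ext fun t => Subtype.ext <| by
    rw [coe_nuclearConj_apply, hl1, MulEquiv.refl_apply]
    exact ldiv_eq_of_mul_eq (by rw [MLoop.one_mul, MLoop.mul_one])
  f_one_left σ := Subtype.ext <| by
    rw [Subtype.coe_mk, MLoop.one_mul, hl1, MLoop.one_mul, coe_one_of_coe_mul hGmul]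
    exact ldiv_eq_of_mul_eq (MLoop.mul_one _)
  f_one_right σ := Subtype.ext <| by
    rw [Subtype.coe_mk, MLoop.mul_one, hl1, MLoop.mul_one, coe_one_of_coe_mul hGmul]
    exact ldiv_eq_of_mul_eq (MLoop.mul_one _)

theorem section_mul_schreierDataOfSection_mul (p q : K × G) :
    let D := schreierDataOfSection hGmul hπ hker hnuc hl1 hl
    l (D.mul p q).1 * ((D.mul p q).2 : L) = (l p.1 * (p.2 : L)) * (l q.1 * (q.2 : L)) := by
  show l (p.1 * q.1) * ((_ * _ * q.2 : G) : L) = _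
  rw [hGmul, hGmul]
  exact mul_mul_mul_eq_of_mem_nucleus (mul_ldiv _ _) (mul_ldiv _ _)
    (hnuc (ldiv_section_mem_ker hπ hker hl p.1 q.1)).1
    (hnuc (nuclearConj hGmul hπ hker hnuc (l q.1) p.2).2).2 (hnuc p.2.2).1 (hnuc q.2.2).2

end Direct

namespace SchreierData

theorem Θ_one_apply {K G : Type*} [MLoop K] [Group G] (D : SchreierData K G) (t : G) :
    D.Θ 1 t = t := by
  rw [D.theta_one]
  rfl

variable {K L : Type*} [MLoop K] [MLoop L] {G : Set L} [Group G] (D : SchreierData K G)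
  {F : K × G → L}

theorem apply_mul_coe (hFmul : ∀ p q : K × G, F (D.mul p q) = F p * F q)
    (hF1 : ∀ t : G, F (1, t) = (t : L)) (σ : K) (b t : G) :
    F (σ, b) * (t : L) = F (σ, b * t) := by
  rw [← hF1 t, ← hFmul]
  simp only [SchreierData.mul, MLoop.mul_one, D.f_one_right, Θ_one_apply, one_mul]

theorem coe_mul_apply (hFmul : ∀ p q : K × G, F (D.mul p q) = F p * F q)
    (hF1 : ∀ t : G, F (1, t) = (t : L)) (σ : K) (t b : G) :
    (t : L) * F (σ, b) = F (σ, D.Θ σ t * b) := by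
  rw [← hF1 t, ← hFmul]
  simp only [SchreierData.mul, MLoop.one_mul, D.f_one_left, one_mul]

theorem coe_mem_middleNucleus (hF : Function.Surjective F)
    (hFmul : ∀ p q : K × G, F (D.mul p q) = F p * F q)
    (hF1 : ∀ t : G, F (1, t) = (t : L)) (t : G) :
    (t : L) ∈ middleNucleus L := by
  intro x y
  obtain ⟨⟨σ, a⟩, rfl⟩ := hF x
  obtain ⟨⟨τ, b⟩, rfl⟩ := hF y
  simp only [D.apply_mul_coe hFmul hF1, D.coe_mul_apply hFmul hF1, ← hFmul, SchreierData.mul,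
    map_mul, mul_assoc]

theorem coe_mem_rightNucleus (hF : Function.Surjective F)
    (hFmul : ∀ p q : K × G, F (D.mul p q) = F p * F q)
    (hF1 : ∀ t : G, F (1, t) = (t : L)) (t : G) :
    (t : L) ∈ rightNucleus L := by
  intro x y
  obtain ⟨⟨σ, a⟩, rfl⟩ := hF x
  obtain ⟨⟨τ, b⟩, rfl⟩ := hF y
  simp only [D.apply_mul_coe hFmul hF1, ← hFmul, SchreierData.mul, mul_assoc]

theorem apply_eq_apply_one_mul (hFmul : ∀ p q : K × G, F (D.mul p q) = F p * F q)
    (hF1 : ∀ t : G, F (1, t) = (t : L)) (p : K × G) : F p = F (p.1, 1) * (p.2 : L) := by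
  rw [D.apply_mul_coe hFmul hF1, one_mul]

theorem midInner_apply_one_Θ (hFmul : ∀ p q : K × G, F (D.mul p q) = F p * F q)
    (hF1 : ∀ t : G, F (1, t) = (t : L)) (σ : K) (t : G) :
    midInner (F (σ, 1)) (D.Θ σ t) = t :=
  midInner_eq_of_mul_eq <| by
    rw [D.apply_mul_coe hFmul hF1, D.coe_mul_apply hFmul hF1, one_mul, mul_one]

theorem coe_f_eq_ldiv (hFmul : ∀ p q : K × G, F (D.mul p q) = F p * F q)
    (hF1 : ∀ t : G, F (1, t) = (t : L)) (σ τ : K) :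
    (D.f σ τ : L) = ldiv (F (σ * τ, 1)) (F (σ, 1) * F (τ, 1)) :=
  Eq.symm <| ldiv_eq_of_mul_eq <| by
    rw [D.apply_mul_coe hFmul hF1, ← hFmul, SchreierData.mul, one_mul, map_one, mul_one, mul_one]

end SchreierData

theorem schreier_stmt11_general {L : Type u} [MLoop L] (G : Set L) [Group G]
    (hGmul : ∀ a b : G, ((a * b : G) : L) = (a : L) * (b : L))
    {Q : Type u} [MLoop Q] (π : L → Q)
    (hπ : ∀ x y : L, π (x * y) = π x * π y)
    (hker : G = {x : L | π x = 1})
    {K : Type u} [MLoop K] :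
    -- direct part
    ((G ⊆ middleNucleus L ∩ rightNucleus L) →
      ∀ κ : K → Q, Function.Bijective κ → (∀ a b : K, κ (a * b) = κ a * κ b) →
      ∀ S : Set L, (1 : L) ∈ S → Set.BijOn π S Set.univ →
      ∀ l : K → L, (∀ σ : K, l σ ∈ S ∧ π (l σ) = κ σ) →
      ∃ D : SchreierData K G,
        (∀ (σ : K) (t : G), MLoop.midInner (l σ) ((D.Θ σ t : G) : L) = (t : L)) ∧
        (∀ σ τ : K, ((D.f σ τ : G) : L) = MLoop.ldiv (l (σ * τ)) (l σ * l τ)) ∧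
        Function.Bijective (fun p : K × G => l p.1 * (p.2 : L)) ∧
        (∀ p q : K × G,
          l (D.mul p q).1 * ((D.mul p q).2 : L)
            = (l p.1 * (p.2 : L)) * (l q.1 * (q.2 : L))) ∧
        (∀ t : G, l 1 * (t : L) = (t : L)) ∧
        (∀ σ : K, π (l σ * ((1 : G) : L)) = κ σ)) ∧
    -- converse part
    (∀ (D : SchreierData K G) (F : K × G → L),
      Function.Bijective F → (∀ p q : K × G, F (D.mul p q) = F p * F q) →
      (∀ t : G, F (1, t) = (t : L)) →
      (G ⊆ middleNucleus L ∩ rightNucleus L) ∧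
      (∀ p : K × G, F p = F (p.1, 1) * (p.2 : L)) ∧
      (∀ (σ : K) (t : G), MLoop.midInner (F (σ, 1)) ((D.Θ σ t : G) : L) = (t : L)) ∧
      (∀ σ τ : K,
        ((D.f σ τ : G) : L) = MLoop.ldiv (F (σ * τ, 1)) (F (σ, 1) * F (τ, 1)))) := by
  refine ⟨fun hnuc κ hκ hκmul S hS1 hS l hl => ?_, fun D F hF hFmul hF1 => ?_⟩
  · have hπl : π ∘ l = κ := funext fun σ => (hl σ).2
    have hl1 : l 1 = 1 := hS.injOn (hl 1).1 hS1 <| by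
      rw [(hl 1).2, map_one_of_map_mul hκmul, map_one_of_map_mul hπ]
    have hlmul (σ τ : K) : π (l (σ * τ)) = π (l σ) * π (l τ) := by
      simp only [(hl _).2, hκmul]
    refine ⟨schreierDataOfSection hGmul hπ hker hnuc hl1 hlmul,
      fun σ t => midInner_nuclearConj_apply hGmul hπ hker hnuc (l σ) t, fun _ _ => rfl,
      bijective_section_mul hπ hker (hπl ▸ hκ),
      section_mul_schreierDataOfSection_mul hGmul hπ hker hnuc hl1 hlmul,
      fun t => by rw [hl1, MLoop.one_mul],
      fun σ => by rw [coe_one_of_coe_mul hGmul, MLoop.mul_one, (hl σ).2]⟩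
  · exact ⟨fun t ht => ⟨D.coe_mem_middleNucleus hF.2 hFmul hF1 ⟨t, ht⟩,
        D.coe_mem_rightNucleus hF.2 hFmul hF1 ⟨t, ht⟩⟩,
      D.apply_eq_apply_one_mul hFmul hF1, D.midInner_apply_one_Θ hFmul hF1,
      D.coe_f_eq_ldiv hFmul hF1⟩

/-- let `G` be a normal subgroup of the loop `L`, with the factor loop
`L/G` realized as a surjective loop homomorphism `π : L → Q` with kernel `G`.
Direct part: if `G` is middle and right nuclear, then for any data pair `(κ, S)` (an
isomorphism `κ : K → L/G` and a left transversal `S` of `L/G` containing the identity)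
with section `l : K → L`, `l σ = S ∩ κ(σ)`, the functions `Θ_σ = (T_{l_σ})⁻¹|_G` and
`f(σ,τ) = l_{στ} \ (l_σ · l_τ)` constitute a Schreier loop `L(Θ,f)` on `K × G`, and
`F(σ,s) = l_σ · s` is a Schreier decomposition of `L` with respect to `G` with
underlying isomorphism `κ`.
Converse part: if `F : L(Θ,f) → L` is any Schreier decomposition of `L` with respect to
`G`, then `G` is middle and right nuclear, `F(σ,s) = l_σ · s` where `l_σ = F(σ,e)`, and
`Θ` and `f` satisfy `Θ_σ = (T_{l_σ})⁻¹|_G` and `f(σ,τ) = l_{στ} \ (l_σ · l_τ)`. -/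
theorem schreier_stmt11 {L : Type u} [MLoop L] (G : Set L) [Group G]
    (hGmul : ∀ a b : G, ((a * b : G) : L) = (a : L) * (b : L))
    (hGone : ((1 : G) : L) = 1)
    (hnorm : IsNormalSubloop G)
    {Q : Type u} [MLoop Q] (π : L → Q)
    (hπ : ∀ x y : L, π (x * y) = π x * π y)
    (hπsurj : Function.Surjective π)
    (hker : G = {x : L | π x = 1})
    {K : Type u} [MLoop K] :
    -- direct part
    ((G ⊆ middleNucleus L ∩ rightNucleus L) →
      ∀ κ : K → Q, Function.Bijective κ → (∀ a b : K, κ (a * b) = κ a * κ b) →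
      ∀ S : Set L, (1 : L) ∈ S → Set.BijOn π S Set.univ →
      ∀ l : K → L, (∀ σ : K, l σ ∈ S ∧ π (l σ) = κ σ) →
      ∃ D : SchreierData K G,
        (∀ (σ : K) (t : G), MLoop.midInner (l σ) ((D.Θ σ t : G) : L) = (t : L)) ∧
        (∀ σ τ : K, ((D.f σ τ : G) : L) = MLoop.ldiv (l (σ * τ)) (l σ * l τ)) ∧
        Function.Bijective (fun p : K × G => l p.1 * (p.2 : L)) ∧
        (∀ p q : K × G,
          l (D.mul p q).1 * ((D.mul p q).2 : L)
            = (l p.1 * (p.2 : L)) * (l q.1 * (q.2 : L))) ∧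
        (∀ t : G, l 1 * (t : L) = (t : L)) ∧
        (∀ σ : K, π (l σ * ((1 : G) : L)) = κ σ)) ∧
    -- converse part
    (∀ (D : SchreierData K G) (F : K × G → L),
      Function.Bijective F → (∀ p q : K × G, F (D.mul p q) = F p * F q) →
      (∀ t : G, F (1, t) = (t : L)) →
      (G ⊆ middleNucleus L ∩ rightNucleus L) ∧
      (∀ p : K × G, F p = F (p.1, 1) * (p.2 : L)) ∧
      (∀ (σ : K) (t : G), MLoop.midInner (F (σ, 1)) ((D.Θ σ t : G) : L) = (t : L)) ∧
      (∀ σ τ : K,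
        ((D.f σ τ : G) : L) = MLoop.ldiv (F (σ * τ, 1)) (F (σ, 1) * F (τ, 1)))) :=
  schreier_stmt11_general G hGmul π hπ hker
end

section
/- Let G be a middle and right nuclear normal subgroup of a loop L. Then L has an automorphism-free Schreier decomposition L(Id,f) with respect to G if and only if either of the following equivalent conditions holds: (A) the image of the map x ↦ T_x|_G : L → Aut(G) consists of inner automorphisms of G; (B) there exists a left transversal of L/G contained in the commutant C_L(G) = {u ∈ L : u·s = s·u for all s ∈ G}. -/
universe u v

/-!
Write `x ~ y` when `y ∈ xG`; right nuclearity of `G` makes this an equivalence. For `g ∈ G`,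
`x·g` commutes with `G` exactly when `T_x|_G` is conjugation by `g⁻¹`, so (A) says that every
coset meets the commutant `C_L(G)`, and choosing one such point per coset gives (B).

Given such a transversal `S`, let `rep x` be the point of `S` in `xG`. Middle nuclearity gives
`(x·t)·σ = (x·σ)·t` for `σ ∈ S` and `t ∈ G`, hence `(σ·t)(τ·t') = (σ·τ)·(t·t')`. So `S` is a loop
under `σ ⋆ τ = rep(σ·τ)`, and `(σ, t) ↦ σ·t` is a Schreier decomposition with `Θ = Id`, where
`f(σ, τ)` is the element of `G` with `σ·τ = (σ ⋆ τ)·f(σ, τ)`. Conversely, for an automorphism-free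
decomposition `F` the points `F(σ, e)` form a transversal commuting with `G`, because `(ε, g)`
commutes with `(σ, e)` when `Θ_σ = Id`.
-/

theorem MLoop.mul_left_cancel_s17 {L : Type u} [MLoop L] {x a b : L} (h : x * a = x * b) : a = b :=
  (MLoop.mul_left_bij x).1 h

theorem MLoop.mul_right_cancel_s17 {L : Type u} [MLoop L] {x a b : L} (h : a * x = b * x) :
    a = b :=
  (MLoop.mul_right_bij x).1 h

theorem MLoop.mul_ldiv_s17 {L : Type u} [MLoop L] (x y : L) : x * MLoop.ldiv x y = y :=
  Function.invFun_eq ((MLoop.mul_left_bij x).2 y)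

theorem MLoop.rdiv_mul_s17 {L : Type u} [MLoop L] (x y : L) : MLoop.rdiv x y * y = x :=
  Function.invFun_eq ((MLoop.mul_right_bij y).2 x)

theorem MLoop.midInner_eq_iff {L : Type u} [MLoop L] {x t z : L} :
    MLoop.midInner x t = z ↔ z * x = x * t := by
  have hmul : MLoop.midInner x t * x = x * t :=
    Function.invFun_eq ((MLoop.mul_right_bij x).2 (x * t))
  exact ⟨fun h => h ▸ hmul, fun h => MLoop.mul_right_cancel_s17 (hmul.trans h.symm)⟩

theorem SchreierData.mul_mk_one {K : Type u} {G : Type v} [MLoop K] [Group G]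
    (D : SchreierData K G) (σ : K) (t g : G) : D.mul (σ, t) (1, g) = (σ, t * g) := by
  simp [SchreierData.mul, MLoop.mul_one, D.f_one_right, D.theta_one]

theorem SchreierData.mk_one_mul {K : Type u} {G : Type v} [MLoop K] [Group G]
    (D : SchreierData K G) (σ : K) (g t : G) : D.mul (1, g) (σ, t) = (σ, D.Θ σ g * t) := by
  simp [SchreierData.mul, MLoop.one_mul, D.f_one_left]

theorem Setoid.exists_transversal_subset {α : Type*} (r : Setoid α) {P : Set α} {a : α}
    (ha : a ∈ P) (hP : ∀ x, ∃ y ∈ P, r x y) :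
    ∃ S ⊆ P, a ∈ S ∧ ∀ x, ∃! s, s ∈ S ∧ r x s := by
  classical
  choose pick hpickP hpick using hP
  let sec : Quotient r → α := Function.update (fun q => pick q.out) ⟦a⟧ a
  have hsecP (q : Quotient r) : sec q ∈ P := by
    by_cases hq : q = ⟦a⟧
    · simp [sec, hq, ha]
    · simp [sec, hq, hpickP]
  have hsec (q : Quotient r) : ⟦sec q⟧ = q := by
    by_cases hq : q = ⟦a⟧
    · simp [sec, hq]
    · simpa [sec, hq, Quotient.mk_out] using (Quotient.sound (hpick q.out)).symm.trans
        (Quotient.out_eq q)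
  refine ⟨Set.range sec, Set.range_subset_iff.2 hsecP, ⟨⟦a⟧, by simp [sec]⟩, fun x => ?_⟩
  refine ⟨sec ⟦x⟧, ⟨⟨_, rfl⟩, Quotient.exact (hsec ⟦x⟧).symm⟩, ?_⟩
  rintro _ ⟨⟨q, rfl⟩, hq⟩
  rw [(Quotient.sound hq).trans (hsec q)]

section

variable {L : Type u} [MLoop L]

def commutant (G : Set L) [Group G] : Set L :=
  {u : L | ∀ g : G, u * (g : L) = (g : L) * u}

theorem one_mem_commutant (G : Set L) [Group G] : (1 : L) ∈ commutant G := fun g => by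
  rw [MLoop.one_mul, MLoop.mul_one]

def MidInnerIsInner (G : Set L) [Group G] : Prop :=
  ∀ x : L, ∃ r : G, ∀ t : G, MLoop.midInner x (t : L) = ((r * t * r⁻¹ : G) : L)

def HasAutFreeSchreierDecomposition (G : Set L) [Group G] : Prop :=
  ∃ (K : Type u) (iK : MLoop K) (D : @SchreierData K (↥G) iK _) (F : K × G → L),
    (∀ σ : K, D.Θ σ = MulEquiv.refl G) ∧
    Function.Bijective F ∧ (∀ p q : K × G, F (D.mul p q) = F p * F q) ∧
    ∀ t : G, F (1, t) = (t : L)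

structure IsCommutingTransversal (G : Set L) [Group G] (S : Set L) : Prop where
  one_mem : (1 : L) ∈ S
  existsUnique : ∀ x : L, ∃! s : L, s ∈ S ∧ ∃ g : G, s = x * (g : L)
  subset_commutant : S ⊆ commutant G

structure IsRightNuclearSubgroup (G : Set L) [Group G] : Prop where
  coe_mul : ∀ a b : G, ((a * b : G) : L) = (a : L) * (b : L)
  coe_one : ((1 : G) : L) = 1
  subset_rightNucleus : G ⊆ rightNucleus L

namespace IsRightNuclearSubgroup

variable {G : Set L} [Group G] (hG : IsRightNuclearSubgroup G)
include hG

theorem mul_coe_mul (x : L) (a b : G) : x * (a : L) * (b : L) = x * ((a * b : G) : L) := by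
  rw [hG.coe_mul, hG.subset_rightNucleus b.2]

theorem mul_coe_mul_inv (x : L) (g : G) : x * (g : L) * ((g⁻¹ : G) : L) = x := by
  rw [hG.mul_coe_mul, mul_inv_cancel, hG.coe_one, MLoop.mul_one]

def cosetSetoid : Setoid L where
  r x y := ∃ g : G, y = x * (g : L)
  iseqv :=
    { refl x := ⟨1, by rw [hG.coe_one, MLoop.mul_one]⟩
      symm := fun ⟨g, h⟩ => ⟨g⁻¹, by rw [h, hG.mul_coe_mul_inv]⟩
      trans := fun ⟨g, hg⟩ ⟨g', hg'⟩ => ⟨g * g', by rw [hg', hg, hG.mul_coe_mul]⟩ }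

theorem mul_coe_mem_commutant_iff {x : L} {g : G} :
    x * (g : L) ∈ commutant G ↔ ∀ t : G, MLoop.midInner x (t : L) = ((g⁻¹ * t * g : G) : L) := by
  constructor
  · intro hxg t
    refine MLoop.midInner_eq_iff.2 (MLoop.mul_right_cancel_s17 (x := (g : L)) ?_)
    calc ((g⁻¹ * t * g : G) : L) * x * g = ((g⁻¹ * t * g : G) : L) * (x * g) :=
          hG.subset_rightNucleus g.2 _ _
      _ = x * g * ((g⁻¹ * t * g : G) : L) := (hxg _).symm
      _ = x * (t : L) * g := by
        rw [hG.mul_coe_mul, hG.mul_coe_mul, show g * (g⁻¹ * t * g) = t * g by group]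
  · intro hx t
    have hconj : (t : L) * x = x * ((g * t * g⁻¹ : G) : L) := by
      simpa [mul_assoc] using MLoop.midInner_eq_iff.1 (hx (g * t * g⁻¹))
    calc x * g * t = x * ((g * t * g⁻¹ : G) : L) * g := by
          rw [hG.mul_coe_mul, hG.mul_coe_mul, inv_mul_cancel_right]
      _ = t * (x * g) := by rw [← hconj, hG.subset_rightNucleus g.2]

theorem mul_right_comm_of_mem_commutant (hGm : G ⊆ middleNucleus L) {u : L}
    (hu : u ∈ commutant G) (x : L) (g : G) : x * (g : L) * u = x * u * (g : L) := by
  rw [hGm g.2, ← hu g, hG.subset_rightNucleus g.2]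

theorem exists_isCommutingTransversal (hA : MidInnerIsInner G) :
    ∃ S, IsCommutingTransversal G S := by
  have hmeet (x : L) : ∃ y ∈ commutant G, hG.cosetSetoid x y := by
    obtain ⟨r, hr⟩ := hA x
    exact ⟨x * ((r⁻¹ : G) : L), hG.mul_coe_mem_commutant_iff.2 (by simpa using hr), r⁻¹, rfl⟩
  obtain ⟨S, hSC, hS1, hS⟩ :=
    hG.cosetSetoid.exists_transversal_subset (one_mem_commutant G) hmeet
  exact ⟨S, ⟨hS1, hS, hSC⟩⟩

end IsRightNuclearSubgroup

theorem IsCommutingTransversal.midInnerIsInner {G S : Set L} [Group G]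
    (hS : IsCommutingTransversal G S) (hG : IsRightNuclearSubgroup G) : MidInnerIsInner G :=
  fun x => by
    obtain ⟨_, ⟨hs, g, rfl⟩, -⟩ := hS.existsUnique x
    exact ⟨g⁻¹, by simpa using hG.mul_coe_mem_commutant_iff.1 (hS.subset_commutant hs)⟩

theorem HasAutFreeSchreierDecomposition.exists_isCommutingTransversal {G : Set L} [Group G]
    (hGone : ((1 : G) : L) = 1) (hD : HasAutFreeSchreierDecomposition G) :
    ∃ S, IsCommutingTransversal G S := by
  obtain ⟨K, iK, D, F, hΘ, hF, hFmul, hFone⟩ := hD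
  have mul_coe (σ : K) (t g : G) : F (σ, t) * (g : L) = F (σ, t * g) := by
    rw [← hFone g, ← hFmul, D.mul_mk_one]
  have coe_mul (σ : K) (g t : G) : (g : L) * F (σ, t) = F (σ, g * t) := by
    rw [← hFone g, ← hFmul, D.mk_one_mul, hΘ, MulEquiv.refl_apply]
  refine ⟨Set.range fun σ => F (σ, 1), ⟨⟨1, by dsimp only; rw [hFone, hGone]⟩, fun x => ?_, ?_⟩⟩
  · obtain ⟨⟨σ, t⟩, rfl⟩ := hF.2 x
    refine ⟨F (σ, 1), ⟨⟨σ, rfl⟩, t⁻¹, by rw [mul_coe, mul_inv_cancel]⟩, ?_⟩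
    rintro _ ⟨⟨σ', rfl⟩, g, hg⟩
    dsimp only at hg ⊢
    rw [mul_coe] at hg
    obtain rfl : σ' = σ := congrArg Prod.fst (hF.1 hg)
    rfl
  · rintro _ ⟨σ, rfl⟩ g
    dsimp only
    rw [mul_coe, coe_mul, one_mul, mul_one]

namespace IsCommutingTransversal

variable {G S : Set L} [Group G]

noncomputable def rep (hS : IsCommutingTransversal G S) (x : L) : S :=
  ⟨(hS.existsUnique x).exists.choose, (hS.existsUnique x).exists.choose_spec.1⟩

theorem exists_rep_eq_mul (hS : IsCommutingTransversal G S) (x : L) :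
    ∃ g : G, (hS.rep x : L) = x * (g : L) :=
  (hS.existsUnique x).exists.choose_spec.2

theorem rep_eq (hS : IsCommutingTransversal G S) {x s : L} (hs : s ∈ S) {g : G}
    (h : s = x * (g : L)) : (hS.rep x : L) = s :=
  (hS.existsUnique x).unique ⟨(hS.rep x).2, hS.exists_rep_eq_mul x⟩ ⟨hs, g, h⟩

variable (hS : IsCommutingTransversal G S) (hG : IsRightNuclearSubgroup G)
include hS hG

theorem rep_mul_coe (x : L) (g : G) : hS.rep (x * (g : L)) = hS.rep x := by
  obtain ⟨g', h⟩ := hS.exists_rep_eq_mul (x * g)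
  exact Subtype.ext (hS.rep_eq (hS.rep _).2 (h.trans (hG.mul_coe_mul x g g'))).symm

theorem rep_coe (s : S) : hS.rep s = s :=
  Subtype.ext (hS.rep_eq s.2 (g := 1) (by rw [hG.coe_one, MLoop.mul_one]))

theorem eq_of_coe_eq_mul_coe {σ τ : S} {g : G} (h : (τ : L) = σ * (g : L)) : τ = σ := by
  rw [← hS.rep_coe hG τ, h, hS.rep_mul_coe hG, hS.rep_coe hG]

theorem exists_eq_mul_of_rep_eq {x y : L} (h : hS.rep x = hS.rep y) :
    ∃ g : G, y = x * (g : L) := by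
  obtain ⟨g, hg⟩ := hS.exists_rep_eq_mul x
  obtain ⟨g', hg'⟩ := hS.exists_rep_eq_mul y
  refine ⟨g * g'⁻¹, ?_⟩
  rw [← hG.mul_coe_mul, ← hg, h, hg', hG.mul_coe_mul_inv]

noncomputable def coord (x : L) : G := (hS.exists_rep_eq_mul x).choose⁻¹

theorem rep_mul_coord (x : L) : (hS.rep x : L) * (hS.coord x : L) = x :=
  (congrArg (· * _) (hS.exists_rep_eq_mul x).choose_spec).trans (hG.mul_coe_mul_inv x _)

theorem coord_coe (s : S) : hS.coord s = 1 := by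
  have h := hS.rep_mul_coord hG s
  rw [hS.rep_coe hG] at h
  exact Subtype.ext (MLoop.mul_left_cancel_s17 (h.trans (by rw [hG.coe_one, MLoop.mul_one])))

theorem bijective_rep_mul_left (σ : S) : Function.Bijective fun τ : S => hS.rep (σ * τ) := by
  refine ⟨fun τ τ' h => ?_, fun ρ => ?_⟩
  · obtain ⟨g, hg⟩ := hS.exists_eq_mul_of_rep_eq hG h
    rw [hG.subset_rightNucleus g.2] at hg
    exact (hS.eq_of_coe_eq_mul_coe hG (MLoop.mul_left_cancel_s17 hg)).symm
  · obtain ⟨g, hg⟩ := hS.exists_rep_eq_mul (MLoop.ldiv σ ρ)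
    refine ⟨hS.rep (MLoop.ldiv σ ρ), ?_⟩
    dsimp only
    rw [hg, ← hG.subset_rightNucleus g.2, MLoop.mul_ldiv_s17, hS.rep_mul_coe hG, hS.rep_coe hG]

theorem bijective_rep_mul_right (hGm : G ⊆ middleNucleus L) (σ : S) :
    Function.Bijective fun τ : S => hS.rep (τ * σ) := by
  have hσ := hS.subset_commutant σ.2
  refine ⟨fun τ τ' h => ?_, fun ρ => ?_⟩
  · obtain ⟨g, hg⟩ := hS.exists_eq_mul_of_rep_eq hG h
    rw [← hG.mul_right_comm_of_mem_commutant hGm hσ] at hg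
    exact (hS.eq_of_coe_eq_mul_coe hG (MLoop.mul_right_cancel_s17 hg)).symm
  · obtain ⟨g, hg⟩ := hS.exists_rep_eq_mul (MLoop.rdiv ρ σ)
    refine ⟨hS.rep (MLoop.rdiv ρ σ), ?_⟩
    dsimp only
    rw [hg, hG.mul_right_comm_of_mem_commutant hGm hσ, MLoop.rdiv_mul_s17, hS.rep_mul_coe hG,
      hS.rep_coe hG]

@[reducible]
noncomputable def loop (hGm : G ⊆ middleNucleus L) : MLoop S where
  mul σ τ := hS.rep (σ * τ)
  one := ⟨1, hS.one_mem⟩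
  mul_left_bij := hS.bijective_rep_mul_left hG
  mul_right_bij := hS.bijective_rep_mul_right hG hGm
  one_mul σ := by
    change hS.rep (1 * σ) = σ
    rw [MLoop.one_mul, hS.rep_coe hG]
  mul_one σ := by
    change hS.rep (σ * 1) = σ
    rw [MLoop.mul_one, hS.rep_coe hG]

theorem mul_coe_mul_mul_coe (hGm : G ⊆ middleNucleus L) (σ τ : S) (t t' : G) :
    (σ : L) * t * (τ * t') = hS.rep (σ * τ) * ((hS.coord (σ * τ) * t * t' : G) : L) := by
  calc (σ : L) * t * (τ * t') = σ * t * τ * t' := (hG.subset_rightNucleus t'.2 _ _).symm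
    _ = σ * τ * t * t' := by rw [hG.mul_right_comm_of_mem_commutant hGm (hS.subset_commutant τ.2)]
    _ = hS.rep (σ * τ) * (hS.coord (σ * τ) : L) * ((t * t' : G) : L) := by
      rw [hS.rep_mul_coord hG, hG.mul_coe_mul]
    _ = hS.rep (σ * τ) * ((hS.coord (σ * τ) * t * t' : G) : L) := by
      rw [hG.mul_coe_mul, mul_assoc]

theorem hasAutFreeSchreierDecomposition (hGm : G ⊆ middleNucleus L) :
    HasAutFreeSchreierDecomposition G := by
  let _ := hS.loop hG hGm
  let D : SchreierData S G :=
    { Θ := fun _ => MulEquiv.refl G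
      f := fun σ τ => hS.coord (σ * τ)
      theta_one := rfl
      f_one_left := fun σ => by
        change hS.coord (1 * σ) = 1
        rw [MLoop.one_mul, hS.coord_coe hG]
      f_one_right := fun σ => by
        change hS.coord (σ * 1) = 1
        rw [MLoop.mul_one, hS.coord_coe hG] }
  refine ⟨S, inferInstance, D, fun p => p.1 * (p.2 : L), fun _ => rfl, ⟨?_, ?_⟩, ?_, ?_⟩
  · rintro ⟨σ, t⟩ ⟨σ', t'⟩ h
    dsimp only at h
    have hσ : σ' = σ := hS.eq_of_coe_eq_mul_coe hG (g := t * t'⁻¹) <| by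
      rw [← hG.mul_coe_mul, h, hG.mul_coe_mul_inv]
    subst hσ
    rw [Subtype.ext (MLoop.mul_left_cancel_s17 h)]
  · exact fun x => ⟨(hS.rep x, hS.coord x), hS.rep_mul_coord hG x⟩
  · rintro ⟨σ, t⟩ ⟨τ, t'⟩
    exact (hS.mul_coe_mul_mul_coe hG hGm σ τ t t').symm
  · exact fun t => MLoop.one_mul (t : L)

end IsCommutingTransversal

end

theorem schreier_stmt17_general {L : Type u} [MLoop L] (G : Set L) [Group G]
    (hGmul : ∀ a b : G, ((a * b : G) : L) = (a : L) * (b : L))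
    (hGone : ((1 : G) : L) = 1)
    (hnuc : G ⊆ middleNucleus L ∩ rightNucleus L) :
    ((∃ (K : Type u) (iK : MLoop K) (D : @SchreierData K (↥G) iK _)
        (F : K × G → L),
        (∀ σ : K, D.Θ σ = MulEquiv.refl G) ∧
        Function.Bijective F ∧ (∀ p q : K × G, F (D.mul p q) = F p * F q) ∧
        ∀ t : G, F (iK.toOne.one, t) = (t : L)) ↔
      (∀ x : L, ∃ r : G, ∀ t : G,
        MLoop.midInner x (t : L) = ((r * t * r⁻¹ : G) : L))) ∧
    ((∀ x : L, ∃ r : G, ∀ t : G,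
        MLoop.midInner x (t : L) = ((r * t * r⁻¹ : G) : L)) ↔
      (∃ S : Set L, (1 : L) ∈ S ∧
        (∀ x : L, ∃! s : L, s ∈ S ∧ ∃ g : G, s = x * (g : L)) ∧
        S ⊆ {u : L | ∀ g : G, u * (g : L) = (g : L) * u})) := by
  obtain ⟨hGm, hGr⟩ := Set.subset_inter_iff.1 hnuc
  have hG : IsRightNuclearSubgroup G := ⟨hGmul, hGone, hGr⟩
  have hAB : MidInnerIsInner G ↔ ∃ S, IsCommutingTransversal G S :=
    ⟨hG.exists_isCommutingTransversal, fun ⟨_, hS⟩ => hS.midInnerIsInner hG⟩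
  have hDB : HasAutFreeSchreierDecomposition G ↔ ∃ S, IsCommutingTransversal G S :=
    ⟨HasAutFreeSchreierDecomposition.exists_isCommutingTransversal hGone,
      fun ⟨_, hS⟩ => hS.hasAutFreeSchreierDecomposition hG hGm⟩
  have hB : (∃ S, IsCommutingTransversal G S) ↔ ∃ S : Set L, (1 : L) ∈ S ∧
      (∀ x : L, ∃! s : L, s ∈ S ∧ ∃ g : G, s = x * (g : L)) ∧ S ⊆ commutant G :=
    exists_congr fun _ => ⟨fun ⟨h1, h2, h3⟩ => ⟨h1, h2, h3⟩, fun ⟨h1, h2, h3⟩ => ⟨h1, h2, h3⟩⟩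
  exact ⟨hDB.trans hAB.symm, hAB.trans hB⟩

/-- a loop `L` has an automorphism-free Schreier decomposition `L(Id,f)`
with respect to a middle and right nuclear normal subgroup `G` iff (A) every restricted
middle inner mapping `T_x|_G` is an inner automorphism of `G`, iff (B) there is a left
transversal of `L/G` contained in the commutant `C_L(G)`. -/
theorem schreier_stmt17 {L : Type u} [MLoop L] (G : Set L) [Group G]
    (hGmul : ∀ a b : G, ((a * b : G) : L) = (a : L) * (b : L))
    (hGone : ((1 : G) : L) = 1)
    (hnorm : IsNormalSubloop G)
    (hnuc : G ⊆ middleNucleus L ∩ rightNucleus L) :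
    ((∃ (K : Type u) (iK : MLoop K) (D : @SchreierData K (↥G) iK _)
        (F : K × G → L),
        (∀ σ : K, D.Θ σ = MulEquiv.refl G) ∧
        Function.Bijective F ∧ (∀ p q : K × G, F (D.mul p q) = F p * F q) ∧
        ∀ t : G, F (iK.toOne.one, t) = (t : L)) ↔
      (∀ x : L, ∃ r : G, ∀ t : G,
        MLoop.midInner x (t : L) = ((r * t * r⁻¹ : G) : L))) ∧
    ((∀ x : L, ∃ r : G, ∀ t : G,
        MLoop.midInner x (t : L) = ((r * t * r⁻¹ : G) : L)) ↔
      (∃ S : Set L, (1 : L) ∈ S ∧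
        (∀ x : L, ∃! s : L, s ∈ S ∧ ∃ g : G, s = x * (g : L)) ∧
        S ⊆ {u : L | ∀ g : G, u * (g : L) = (g : L) * u})) :=
  schreier_stmt17_general G hGmul hGone hnuc
end
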